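/- Let E be a finite effect algebra with (pairwise distinct) atoms a_1,…,a_m, and suppose s_1,…,s_m are nonnegative real numbers such that Σ_{t=1}^m y_t s_t = 1 for every (y_1,…,y_m) ∈ Seq(E). If x_1 = k_1 a_1 ⊕ … ⊕ k_m a_m and x_2 = l_1 a_1 ⊕ … ⊕ l_m a_m are elements of E such that x_1 ⊕ x_2 is defined, then Σ_{t=1}^m k_t s_t + Σ_{t=1}^m l_t s_t ≤ 1, and x_1 ⊕ x_2 = (k_1+l_1) a_1 ⊕ … ⊕ (k_m+l_m) a_m. -/

import Mathlib

/-- An effect algebra: a set with 0, 1 and a partially defined binary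
operation `⊕`, modeled as an `Option`-valued operation. -/
structure EffectAlgebra (E : Type*) where
  oplus : E → E → Option E
  zero : E
  one : E
  comm : ∀ p q, oplus p q = oplus q p
  assoc : ∀ p q r s qr, oplus q r = some qr → oplus p qr = some s →
    ∃ pq, oplus p q = some pq ∧ oplus pq r = some s
  orthosupp : ∀ p, ∃! q, oplus p q = some one
  zero_unit : ∀ p q, oplus one p = some q → p = zero

namespace EffectAlgebra

variable {E : Type*}

/-- `p ≤ q` iff there is `r` with `p ⊕ r` defined and equal to `q`. -/
def le (W : EffectAlgebra E) (p q : E) : Prop := ∃ r, W.oplus p r = some q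

/-- An atom is a minimal element of `E \ {0}`. -/
def IsAtomElem (W : EffectAlgebra E) (x : E) : Prop :=
  x ≠ W.zero ∧ ∀ y : E, W.le y x → y ≠ W.zero → y = x

/-- Partial orthosum of a list of elements. -/
def listSum (W : EffectAlgebra E) : List E → Option E
  | [] => some W.zero
  | x :: xs => (listSum W xs).bind (fun y => W.oplus x y)

/-- The orthosum `k 0 • a 0 ⊕ ⋯ ⊕ k (m-1) • a (m-1)`, when defined. -/
def mulSum (W : EffectAlgebra E) {m : ℕ} (a : Fin m → E) (k : Fin m → ℕ) : Option E :=
  W.listSum ((List.ofFn (fun t => List.replicate (k t) (a t))).flatten)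

/-- `Seq(E)`: tuples `k` with `⨁ k t • a t` defined and equal to `1`. -/
def SeqSet (W : EffectAlgebra E) {m : ℕ} (a : Fin m → E) : Set (Fin m → ℕ) :=
  {k | W.mulSum a k = some W.one}

/-- `a : Fin m → E` enumerates the atoms of `E` without repetition. -/
def AtomFamily (W : EffectAlgebra E) {m : ℕ} (a : Fin m → E) : Prop :=
  Function.Injective a ∧ (∀ t, W.IsAtomElem (a t)) ∧
    ∀ x : E, W.IsAtomElem x → ∃ t, x = a t

/-- `A ∈ M(E)`: the rows of `A` are pairwise distinct and enumerate `Seq(E)`. -/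
def MemM (W : EffectAlgebra E) {m n : ℕ} (a : Fin m → E) (A : Matrix (Fin n) (Fin m) ℕ) : Prop :=
  (∀ i j : Fin n, i ≠ j → ∃ t, A i t ≠ A j t) ∧
    {k : Fin m → ℕ | ∃ i, A i = k} = W.SeqSet a

/-- A state on an effect algebra. -/
def IsState (W : EffectAlgebra E) (s : E → ℝ) : Prop :=
  (∀ x, 0 ≤ s x ∧ s x ≤ 1) ∧ s W.one = 1 ∧
    ∀ p q r, W.oplus p q = some r → s p + s q ≤ 1 ∧ s r = s p + s q

end EffectAlgebra

/-- `(A|1)`: the matrix `A` augmented by a column of ones. -/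
def augmentOnes {n m : ℕ} {R : Type*} [One R] (A : Matrix (Fin n) (Fin m) R) :
    Matrix (Fin n) (Fin (m + 1)) R :=
  Matrix.of fun i j => if h : (j : ℕ) < m then A i ⟨j, h⟩ else 1

/-!
Every element of a finite effect algebra is an orthosum of atoms: below a nonzero `x` there is a
minimal nonzero element `b`, which is an atom, and `x = b ⊕ r` with `r` strictly below `x`.
Since orthosums of lists do not depend on the order of the summands, concatenating
representations of `x₁` and `x₂` represents `x₁ ⊕ x₂`. For the inequality, represent the
orthosupplement of `x₁ ⊕ x₂` as well: the three tuples add up to an element of `Seq(E)`, whose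
weight is `1`, and the weights are nonnegative.
-/

theorem List.count_flatten_ofFn_replicate {α : Type*} [DecidableEq α] {m : ℕ} (a : Fin m → α)
    (k : Fin m → ℕ) (b : α) :
    (List.ofFn fun t => List.replicate (k t) (a t)).flatten.count b =
      ∑ t, if a t = b then k t else 0 := by
  simp [List.count_flatten, List.map_ofFn, Function.comp_def, List.count_replicate, List.sum_ofFn]

theorem List.flatten_ofFn_replicate_add_perm {α : Type*} {m : ℕ} (a : Fin m → α)
    (k l : Fin m → ℕ) :
    (List.ofFn fun t => List.replicate (k t + l t) (a t)).flatten.Perm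
      ((List.ofFn fun t => List.replicate (k t) (a t)).flatten ++
        (List.ofFn fun t => List.replicate (l t) (a t)).flatten) := by
  classical
  refine List.perm_iff_count.2 fun b => ?_
  simp only [List.count_append, List.count_flatten_ofFn_replicate, ← Finset.sum_add_distrib,
    ite_add_zero]

theorem List.flatten_ofFn_replicate_single_perm {α : Type*} {m : ℕ} (a : Fin m → α)
    (t : Fin m) :
    (List.ofFn fun u => List.replicate ((Pi.single t 1 : Fin m → ℕ) u) (a u)).flatten.Perm
      [a t] := by
  classical
  refine List.perm_iff_count.2 fun b => ?_
  rw [List.count_flatten_ofFn_replicate, Finset.sum_eq_single t (by simp_all) (by simp)]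
  simp [List.count_singleton]

namespace EffectAlgebra

variable {E : Type*} (W : EffectAlgebra E)

theorem assoc_rev {p q r s pq : E} (hpq : W.oplus p q = some pq) (hs : W.oplus pq r = some s) :
    ∃ qr, W.oplus q r = some qr ∧ W.oplus p qr = some s := by
  obtain ⟨rp, hrp, hrpq⟩ := W.assoc r p q s pq hpq (by rwa [W.comm])
  obtain ⟨qr, hqr, hqrp⟩ := W.assoc q r p s rp hrp (by rwa [W.comm])
  exact ⟨qr, hqr, by rwa [W.comm]⟩

theorem left_comm {x y w v z : E} (hv : W.oplus y w = some v) (hz : W.oplus x v = some z) :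
    ∃ v', W.oplus x w = some v' ∧ W.oplus y v' = some z := by
  obtain ⟨xy, hxy, hxyw⟩ := W.assoc x y w z v hv hz
  exact W.assoc_rev (by rwa [W.comm]) hxyw

theorem bind_oplus_left_comm (x y w : E) :
    (W.oplus y w).bind (W.oplus x) = (W.oplus x w).bind (W.oplus y) := by
  have key : ∀ x y z : E, (W.oplus y w).bind (W.oplus x) = some z →
      (W.oplus x w).bind (W.oplus y) = some z := by
    intro x y z h
    obtain ⟨v, hv, hz⟩ := Option.bind_eq_some_iff.1 h
    obtain ⟨v', hv', hz'⟩ := W.left_comm hv hz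
    exact Option.bind_eq_some_iff.2 ⟨v', hv', hz'⟩
  ext z
  exact ⟨key x y z, key y x z⟩

theorem one_oplus_zero : W.oplus W.one W.zero = some W.one := by
  obtain ⟨q, hq, -⟩ := W.orthosupp W.one
  rwa [W.zero_unit q W.one hq] at hq

theorem zero_oplus (p : E) : W.oplus W.zero p = some p := by
  obtain ⟨q, hq, -⟩ := W.orthosupp p
  obtain ⟨zp, hzp, hzpq⟩ := W.assoc W.zero p q W.one W.one hq
    ((W.comm _ _).trans W.one_oplus_zero)
  -- `p` and `0 ⊕ p` are both orthosupplements of `q`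
  obtain ⟨_, _, hq_supp⟩ := W.orthosupp q
  rwa [hq_supp zp ((W.comm q zp).trans hzpq), ← hq_supp p ((W.comm q p).trans hq)] at hzp

theorem oplus_zero (p : E) : W.oplus p W.zero = some p := by
  rw [W.comm]; exact W.zero_oplus p

theorem oplus_left_cancel {p b c v : E} (hb : W.oplus p b = some v) (hc : W.oplus p c = some v) :
    b = c := by
  obtain ⟨d, hd, -⟩ := W.orthosupp v
  -- both `b` and `c` are orthosupplements of `p ⊕ d`
  have h_supp : ∀ x, W.oplus p x = some v →
      ∃ pd, W.oplus p d = some pd ∧ W.oplus pd x = some W.one := by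
    intro x hx
    obtain ⟨xd, hxd, hpxd⟩ := W.assoc_rev hx hd
    exact W.assoc p d x W.one xd (by rwa [W.comm]) hpxd
  obtain ⟨pd, hpd, hpdb⟩ := h_supp b hb
  obtain ⟨pd', hpd', hpdc⟩ := h_supp c hc
  obtain rfl : pd = pd' := Option.some_injective _ (hpd.symm.trans hpd')
  obtain ⟨_, _, h_unique⟩ := W.orthosupp pd
  rw [h_unique b hpdb, h_unique c hpdc]

theorem eq_zero_of_oplus_eq_zero {y u : E} (h : W.oplus y u = some W.zero) :
    y = W.zero ∧ u = W.zero := by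
  obtain ⟨u1, hu1, -⟩ := W.assoc_rev h (W.zero_oplus W.one)
  obtain rfl : u = W.zero := W.zero_unit u u1 (by rwa [W.comm])
  rw [W.oplus_zero] at h
  exact ⟨Option.some_injective _ h, rfl⟩

theorem le_refl (p : E) : W.le p p := ⟨W.zero, W.oplus_zero p⟩

theorem le_trans {p q r : E} (hpq : W.le p q) (hqr : W.le q r) : W.le p r := by
  obtain ⟨u, hu⟩ := hpq
  obtain ⟨v, hv⟩ := hqr
  obtain ⟨uv, -, huv⟩ := W.assoc_rev hu hv
  exact ⟨uv, huv⟩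

theorem le_antisymm {p q : E} (hpq : W.le p q) (hqp : W.le q p) : p = q := by
  obtain ⟨r, hr⟩ := hpq
  obtain ⟨u, hu⟩ := hqp
  obtain ⟨ru, hru, hpru⟩ := W.assoc_rev hr hu
  obtain rfl : ru = W.zero := W.oplus_left_cancel hpru (W.oplus_zero p)
  obtain rfl := (W.eq_zero_of_oplus_eq_zero hru).1
  rw [W.oplus_zero] at hr
  exact Option.some_injective _ hr

def lt (p q : E) : Prop := W.le p q ∧ p ≠ q

theorem wellFounded_lt [Finite E] : WellFounded W.lt := by
  have : IsTrans E W.lt := ⟨fun p q r ⟨hpq, hne⟩ ⟨hqr, _⟩ =>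
    ⟨W.le_trans hpq hqr, fun hpr => hne (W.le_antisymm hpq (hpr ▸ hqr))⟩⟩
  have : Std.Irrefl W.lt := ⟨fun p ⟨_, hne⟩ => hne rfl⟩
  exact Finite.wellFounded_of_trans_of_irrefl W.lt

theorem exists_atom_le [Finite E] {x : E} (hx : x ≠ W.zero) : ∃ b, W.IsAtomElem b ∧ W.le b x := by
  obtain ⟨b, ⟨hb, hbx⟩, hmin⟩ :=
    W.wellFounded_lt.has_min {y | y ≠ W.zero ∧ W.le y x} ⟨x, hx, W.le_refl x⟩
  refine ⟨b, ⟨hb, fun y hyb hy => ?_⟩, hbx⟩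
  by_contra hne
  exact hmin y ⟨hy, W.le_trans hyb hbx⟩ ⟨hyb, hne⟩

theorem listSum_perm {L₁ L₂ : List E} (h : L₁.Perm L₂) : W.listSum L₁ = W.listSum L₂ := by
  induction h with
  | nil => rfl
  | cons c _ ih => simp only [listSum, ih]
  | swap c d L =>
    simp only [listSum]
    cases W.listSum L with
    | none => rfl
    | some u => exact (W.bind_oplus_left_comm c d u).symm
  | trans _ _ ih₁ ih₂ => exact ih₁.trans ih₂

theorem listSum_append {L₁ L₂ : List E} {x₁ x₂ x : E}
    (h₁ : W.listSum L₁ = some x₁) (h₂ : W.listSum L₂ = some x₂) (hx : W.oplus x₁ x₂ = some x) :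
    W.listSum (L₁ ++ L₂) = some x := by
  induction L₁ generalizing x₁ x with
  | nil =>
    obtain rfl : W.zero = x₁ := Option.some_injective _ h₁
    rw [W.zero_oplus] at hx
    rwa [← Option.some_injective _ hx]
  | cons c L ih =>
    obtain ⟨w, hw, hcw⟩ := Option.bind_eq_some_iff.1 h₁
    obtain ⟨wx₂, hwx₂, hcwx₂⟩ := W.assoc_rev hcw hx
    exact Option.bind_eq_some_iff.2 ⟨wx₂, ih hw hwx₂, hcwx₂⟩

variable {m : ℕ} {a : Fin m → E}

theorem mulSum_add {k l : Fin m → ℕ} {x₁ x₂ x : E}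
    (hk : W.mulSum a k = some x₁) (hl : W.mulSum a l = some x₂) (hx : W.oplus x₁ x₂ = some x) :
    W.mulSum a (fun t => k t + l t) = some x :=
  (W.listSum_perm (List.flatten_ofFn_replicate_add_perm a k l)).trans (W.listSum_append hk hl hx)

theorem mulSum_single (t : Fin m) : W.mulSum a (Pi.single t 1) = some (a t) :=
  (W.listSum_perm (List.flatten_ofFn_replicate_single_perm a t)).trans (W.oplus_zero (a t))

theorem mulSum_zero : W.mulSum a 0 = some W.zero := by
  simp [mulSum, listSum]

theorem exists_mulSum_eq [Finite E] (ha : ∀ x, W.IsAtomElem x → ∃ t, x = a t) (x : E) :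
    ∃ n : Fin m → ℕ, W.mulSum a n = some x := by
  induction x using W.wellFounded_lt.induction with | _ x ih => ?_
  by_cases hx : x = W.zero
  · exact ⟨0, hx ▸ W.mulSum_zero⟩
  obtain ⟨b, hb, r, hbr⟩ := W.exists_atom_le hx
  obtain ⟨t, rfl⟩ := ha b hb
  have hrx : r ≠ x := by
    rintro rfl
    exact hb.1 (W.oplus_left_cancel (by rwa [W.comm]) (W.oplus_zero r))
  obtain ⟨n, hn⟩ := ih r ⟨⟨a t, by rwa [W.comm]⟩, hrx⟩
  exact ⟨_, W.mulSum_add (k := Pi.single t 1) (W.mulSum_single t) hn hbr⟩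

theorem sum_mul_le_one_of_mulSum_eq [Finite E] (ha : ∀ x, W.IsAtomElem x → ∃ t, x = a t)
    {s : Fin m → ℝ} (hs : ∀ t, 0 ≤ s t) (hsol : ∀ y ∈ W.SeqSet a, ∑ t, (y t : ℝ) * s t = 1)
    {k : Fin m → ℕ} {x : E} (hk : W.mulSum a k = some x) :
    ∑ t, (k t : ℝ) * s t ≤ 1 := by
  obtain ⟨x', hx', -⟩ := W.orthosupp x
  obtain ⟨n, hn⟩ := W.exists_mulSum_eq ha x'
  calc ∑ t, (k t : ℝ) * s t
      ≤ ∑ t, ((k t + n t : ℕ) : ℝ) * s t := by gcongr with t; exacts [hs t, Nat.le_add_right _ _]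
    _ = 1 := hsol _ (W.mulSum_add hk hn hx')

end EffectAlgebra

/-- Additivity: if `x₁ = ⨁ k t • a t`, `x₂ = ⨁ l t • a t` and `x₁ ⊕ x₂` is
defined, then `∑ k t * s t + ∑ l t * s t ≤ 1` and
`x₁ ⊕ x₂ = ⨁ (k t + l t) • a t`. -/
theorem sum_additive {E : Type*} [Fintype E] (W : EffectAlgebra E)
    {m : ℕ} (a : Fin m → E) (ha : W.AtomFamily a)
    (s : Fin m → ℝ) (hs : ∀ t, 0 ≤ s t)
    (hsol : ∀ y ∈ W.SeqSet a, ∑ t : Fin m, (y t : ℝ) * s t = 1)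
    (x₁ x₂ x : E) (k l : Fin m → ℕ)
    (hk : W.mulSum a k = some x₁) (hl : W.mulSum a l = some x₂)
    (hx : W.oplus x₁ x₂ = some x) :
    (∑ t : Fin m, (k t : ℝ) * s t) + (∑ t : Fin m, (l t : ℝ) * s t) ≤ 1 ∧
      W.mulSum a (fun t => k t + l t) = some x := by
  have hkl := W.mulSum_add hk hl hx
  refine ⟨?_, hkl⟩
  rw [← Finset.sum_add_distrib]
  simpa only [Nat.cast_add, add_mul] using W.sum_mul_le_one_of_mulSum_eq ha.2.2 hs hsol hkl
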